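/- arXiv:1605.04205 — 4 statements merged into one kernel-verified Lean document; each statement's English description precedes it below -/
import Mathlib

section
/- Let p and q be primes with q dividing p - 1. Suppose a non-trivial finite q-group Q acts by automorphisms on a non-trivial finite p-group P. Then there exists an element x of P of order p such that the stabilizer in Q of the subgroup generated by x is non-trivial. -/
/-!
Choose `g ∈ Q` of order `q`. The central elements `x` of `P` with `x ^ p = 1` form a
nontrivial characteristic subgroup `V = Ω₁(Z(P))`, an `𝔽_p`-vector space on which `g` acts
linearly with `g ^ q = 1`. As `q ∣ p - 1`, `𝔽_p` contains the `q`-th roots of unity, so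
`X ^ q - 1` splits and `g` has an eigenvector `x ∈ V`: then `g • x` is a power of `x`, so `g`
stabilizes `⟨x⟩`.
-/

open Pointwise Polynomial

namespace Module.End

variable {K V : Type*} [Field K] [AddCommGroup V] [Module K V] [FiniteDimensional K V]
  [Nontrivial V]

theorem exists_hasEigenvalue_of_splits_of_aeval_eq_zero {f : End K V} {P : K[X]}
    (hP : P.Splits) (hP0 : P ≠ 0) (hfP : aeval f P = 0) : ∃ μ, f.HasEigenvalue μ := by
  have hsplits : (minpoly K f).Splits := hP.of_dvd hP0 (minpoly.dvd K f hfP)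
  have hdeg : (minpoly K f).degree ≠ 0 :=
    (minpoly.degree_pos (Algebra.IsIntegral.isIntegral f)).ne'
  obtain ⟨μ, hμ⟩ := hsplits.exists_eval_eq_zero hdeg
  exact ⟨μ, hasEigenvalue_of_isRoot hμ⟩

theorem exists_hasEigenvalue_of_pow_eq_one {f : End K V} {n : ℕ} {ζ : K}
    (hζ : IsPrimitiveRoot ζ n) (hn : n ≠ 0) (hf : f ^ n = 1) : ∃ μ, f.HasEigenvalue μ :=
  exists_hasEigenvalue_of_splits_of_aeval_eq_zero (by simpa using X_pow_sub_one_splits hζ)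
    (X_pow_sub_C_ne_zero (Nat.pos_of_ne_zero hn) 1) (by simp [hf])

end Module.End

theorem ZMod.exists_isPrimitiveRoot_of_dvd {p n : ℕ} [Fact p.Prime] (hn : n ∣ p - 1) :
    ∃ ζ : ZMod p, IsPrimitiveRoot ζ n := by
  obtain ⟨u, hu⟩ := IsCyclic.exists_ofOrder_eq_natCard (α := (ZMod p)ˣ)
  rw [Nat.card_eq_fintype_card, ZMod.card_units] at hu
  have hu' : IsPrimitiveRoot (u : ZMod p) (p - 1) := by
    rw [← hu, ← orderOf_units]
    exact IsPrimitiveRoot.orderOf _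
  obtain ⟨d, hd⟩ := hn
  have hd0 : d ≠ 0 := by
    rintro rfl
    have := (Fact.out : p.Prime).two_le
    omega
  exact ⟨_, by simpa [hd, hd0] using hu'.pow_of_dvd hd0 (hd ▸ dvd_mul_left d n)⟩

theorem IsPGroup.exists_orderOf_eq {p : ℕ} {G : Type*} [Group G] [Finite G] [Nontrivial G]
    [Fact p.Prime] (hG : IsPGroup p G) : ∃ g : G, orderOf g = p := by
  obtain ⟨n, hn, hcard⟩ := hG.nontrivial_iff_card.mp ‹_›
  exact exists_prime_orderOf_dvd_card' p (hcard ▸ dvd_pow_self p hn.ne')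

open IsMulCommutative in
theorem MulAut.exists_ne_one_apply_mem_zpowers {G : Type*} [Group G] [IsMulCommutative G]
    [Finite G] [Nontrivial G] {p n : ℕ} [Fact p.Prime] (hG : ∀ x : G, x ^ p = 1)
    (hn : n ∣ p - 1) (φ : MulAut G) (hφ : φ ^ n = 1) :
    ∃ x : G, x ≠ 1 ∧ φ x ∈ Subgroup.zpowers x := by
  let : Module (ZMod p) (Additive G) := AddCommGroup.zmodModule (n := p) fun x => hG x
  let T : Module.End (ZMod p) (Additive G) :=
    AddMonoidHom.toZModLinearMap p φ.toMonoidHom.toAdditive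
  have hT_pow (k : ℕ) (x : Additive G) : (T ^ k) x = .ofMul ((φ ^ k) x.toMul) := by
    induction k generalizing x with
    | zero => rfl
    | succ k ih => rw [pow_succ', Module.End.mul_apply, ih, pow_succ', MulAut.mul_apply]; rfl
  have hT : T ^ n = 1 := by
    ext x
    rw [hT_pow, hφ]
    rfl
  obtain ⟨ζ, hζ⟩ := ZMod.exists_isPrimitiveRoot_of_dvd hn
  obtain ⟨μ, hμ⟩ := T.exists_hasEigenvalue_of_pow_eq_one hζ
    (Nat.pos_of_dvd_of_pos hn (Nat.sub_pos_of_lt (Fact.out : p.Prime).one_lt)).ne' hT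
  obtain ⟨v, hv⟩ := hμ.exists_hasEigenvector
  have hφv : φ v.toMul = v.toMul ^ μ.val := by
    change T v = μ.val • v
    rw [hv.apply_eq_smul, ← Nat.cast_smul_eq_nsmul (ZMod p), ZMod.natCast_zmod_val]
  exact ⟨v.toMul, hv.2, hφv ▸ Subgroup.npow_mem_zpowers _ _⟩

namespace Subgroup

variable (G : Type*) [Group G] (n : ℕ)

/-- `Ω₁(Z(G))` when `n` is a prime `p`. -/
def centerTorsionBy : Subgroup G where
  carrier := {x | x ∈ center G ∧ x ^ n = 1}
  one_mem' := ⟨(center G).one_mem, one_pow n⟩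
  mul_mem' {a b} := fun ⟨ha, han⟩ ⟨hb, hbn⟩ =>
    ⟨(center G).mul_mem ha hb, by
      rw [Commute.mul_pow (mem_center_iff.mp hb a), han, hbn, one_mul]⟩
  inv_mem' := fun ⟨ha, han⟩ => ⟨(center G).inv_mem ha, by rw [inv_pow, han, inv_one]⟩

variable {G n}

instance : IsMulCommutative (centerTorsionBy G n) :=
  ⟨⟨fun a b => Subtype.ext (mem_center_iff.mp a.2.1 b).symm⟩⟩

instance : (centerTorsionBy G n).Characteristic :=
  characteristic_iff_le_comap.mpr fun φ _ ⟨hx, hxn⟩ =>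
    ⟨characteristic_iff_le_comap.mp centerCharacteristic φ hx, by
      rw [← map_pow, hxn, map_one]⟩

theorem centerTorsionBy.pow_eq_one (x : centerTorsionBy G n) : x ^ n = 1 :=
  Subtype.ext x.2.2

theorem _root_.IsPGroup.nontrivial_centerTorsionBy {p : ℕ} [Fact p.Prime] [Finite G]
    [Nontrivial G] (hG : IsPGroup p G) : Nontrivial (centerTorsionBy G p) := by
  have := hG.center_nontrivial
  obtain ⟨z, hz⟩ := (hG.to_subgroup (center G)).exists_orderOf_eq
  refine (nontrivial_iff_exists_ne_one _).mpr ⟨z, ⟨z.2, ?_⟩, fun h => ?_⟩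
  · exact_mod_cast hz ▸ pow_orderOf_eq_one z
  · exact (Fact.out : p.Prime).ne_one
      (by rw [← hz, show z = 1 from Subtype.ext h, orderOf_one])

end Subgroup

theorem MulAction.mem_stabilizer_zpowers_of_smul_mem {M G : Type*} [Group M] [Group G]
    [Finite G] [MulDistribMulAction M G] {g : M} {x : G} (h : g • x ∈ Subgroup.zpowers x) :
    g ∈ stabilizer M (Subgroup.zpowers x) := by
  have hsmul : g • Subgroup.zpowers x = Subgroup.zpowers (g • x) := by
    rw [Subgroup.pointwise_smul_def]
    exact MonoidHom.map_zpowers (MulDistribMulAction.toMonoidHom G g) x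
  rw [mem_stabilizer_iff, hsmul]
  refine Subgroup.eq_of_le_of_card_ge (Subgroup.zpowers_le.mpr h) ?_
  rw [Nat.card_zpowers, Nat.card_zpowers]
  exact (MulEquiv.orderOf_eq (MulDistribMulAction.toMulEquiv G g) x).ge

/-- Let `p` and `q` be primes with `q ∣ p - 1`. If a non-trivial finite `q`-group `Q`
acts by automorphisms on a non-trivial finite `p`-group `P`, then there is `x ∈ P` of
order `p` whose generated subgroup has non-trivial (setwise) stabilizer in `Q`. -/
theorem defect_stmt_0 (p q : ℕ) (hp : p.Prime) (hq : q.Prime) (hqp : q ∣ p - 1)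
    (Q P : Type*) [Group Q] [Group P] [Finite Q] [Finite P] [MulDistribMulAction Q P]
    (hQ : IsPGroup q Q) (hP : IsPGroup p P) (hQnt : Nontrivial Q) (hPnt : Nontrivial P) :
    ∃ x : P, orderOf x = p ∧ MulAction.stabilizer Q (Subgroup.zpowers x) ≠ ⊥ := by
  have := Fact.mk hp
  have := Fact.mk hq
  have := hP.nontrivial_centerTorsionBy
  obtain ⟨g, hg⟩ := hQ.exists_orderOf_eq
  let V := Subgroup.centerTorsionBy P p
  let φ := MulAut.characteristic V (MulDistribMulAction.toMulAut Q P g)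
  have hφ : φ ^ q = 1 := by
    rw [← map_pow, ← map_pow, ← hg, pow_orderOf_eq_one, map_one, map_one]
  obtain ⟨x, hx1, hφx⟩ :=
    MulAut.exists_ne_one_apply_mem_zpowers Subgroup.centerTorsionBy.pow_eq_one hqp φ hφ
  refine ⟨x, orderOf_eq_prime x.2.2 (by simpa using hx1), fun hbot => ?_⟩
  have hgx : g • (x : P) ∈ Subgroup.zpowers (x : P) := by
    have := Subgroup.mem_map_of_mem V.subtype hφx
    rwa [MonoidHom.map_zpowers] at this
  have hg1 := hbot ▸ MulAction.mem_stabilizer_zpowers_of_smul_mem hgx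
  exact hq.ne_one (by rw [← hg, Subgroup.mem_bot.mp hg1, orderOf_one])
end

section
/- Let p and q be primes with q dividing p - 1, let G be a finite group, and suppose that for every subgroup U of G of order p, q does not divide the order of the normalizer N_G(U). Then for every non-trivial p-subgroup R of G, q does not divide the order of N_G(R). -/
/-!
Let `g ∈ N_G(R)` have order `q`. Conjugation by `g` preserves the center `Z(R)`, hence its
`p`-torsion, a nonzero `𝔽_p`-vector space on which `g` acts linearly with `g ^ q = 1`. As
`q ∣ p - 1`, `𝔽_p` contains a primitive `q`-th root of unity, so `X ^ q - 1` splits over `𝔽_p` and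
`g` has an eigenvector `x`. Then `U = ⟨x⟩` has order `p` and is normalized by `g`, so
`q ∣ |N_G(U)|`.
-/

open Polynomial

theorem Module.End.exists_hasEigenvalue_of_aeval_eq_zero {K V : Type*} [Field K] [AddCommGroup V]
    [Module K V] [FiniteDimensional K V] [Nontrivial V] {f : Module.End K V} {P : K[X]}
    (hP : P.Splits) (hP₀ : P ≠ 0) (hfP : aeval f P = 0) : ∃ μ, f.HasEigenvalue μ := by
  have hsplit : (minpoly K f).Splits := hP.of_dvd hP₀ (minpoly.dvd K f hfP)
  obtain ⟨μ, hμ⟩ :=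
    hsplit.exists_eval_eq_zero (minpoly.degree_pos (Algebra.IsIntegral.isIntegral f)).ne'
  exact ⟨μ, Module.End.hasEigenvalue_of_isRoot hμ⟩

theorem Module.End.exists_hasEigenvalue_of_pow_eq_one_s1 {K V : Type*} [Field K] [AddCommGroup V]
    [Module K V] [FiniteDimensional K V] [Nontrivial V] {f : Module.End K V} {n : ℕ} {ζ : K}
    (hζ : IsPrimitiveRoot ζ n) (hn : n ≠ 0) (hf : f ^ n = 1) : ∃ μ, f.HasEigenvalue μ :=
  exists_hasEigenvalue_of_aeval_eq_zero (X_pow_sub_one_splits hζ)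
    (X_pow_sub_C_ne_zero (Nat.pos_of_ne_zero hn) 1) (by simp [hf])

theorem ZMod.exists_isPrimitiveRoot_of_dvd_sub_one {p q : ℕ} [Fact p.Prime] (hq : q.Prime)
    (hqp : q ∣ p - 1) : ∃ ζ : ZMod p, IsPrimitiveRoot ζ q := by
  have : Fact q.Prime := ⟨hq⟩
  obtain ⟨u, hu⟩ := exists_prime_orderOf_dvd_card' (G := (ZMod p)ˣ) q
    (by rwa [Nat.card_eq_fintype_card, ZMod.card_units])
  refine ⟨u, ?_⟩
  rw [← hu, ← orderOf_units]
  exact IsPrimitiveRoot.orderOf _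

theorem Subgroup.normalizer_le_normalizer_map_center {G : Type*} [Group G] (R : Subgroup G) :
    normalizer (R : Set G) ≤ normalizer (((center R).map R.subtype : Subgroup G) : Set G) :=
  le_normalizer_iff.mpr <| by
    rintro g hg _ ⟨c, hc, rfl⟩
    exact ⟨R.normalizerMonoidHom ⟨g, hg⟩ c, MulEquivClass.apply_mem_center _ hc, rfl⟩

theorem Subgroup.mem_normalizer_zpowers_of_conj_mem {G : Type*} [Group G] [Finite G] {g x : G}
    (h : g * x * g⁻¹ ∈ zpowers x) : g ∈ normalizer (zpowers x : Set G) :=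
  mem_normalizer_fintype <| by
    rintro _ ⟨k, rfl⟩
    simpa [conj_zpow] using zpow_mem h k

open scoped IsMulCommutative in
theorem exists_orderOf_eq_prime_smul_mem_zpowers {p q : ℕ} [hp : Fact p.Prime] (hq : q.Prime)
    (hqp : q ∣ p - 1) {M A : Type*} [Monoid M] [Group A] [IsMulCommutative A] [Finite A]
    [MulDistribMulAction M A] (hpA : p ∣ Nat.card A) {g : M} (hg : g ^ q = 1) :
    ∃ a : A, orderOf a = p ∧ g • a ∈ Subgroup.zpowers a := by
  let V := AddSubgroup.torsionBy (Additive A) p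
  let _ : Module (ZMod p) V := AddSubgroup.torsionBy.zmodModule
  have hV {v : Additive A} : v ∈ V ↔ v.toMul ^ p = 1 := by
    rw [AddSubgroup.torsionBy.nsmul_iff, ← toMul_nsmul, ← toMul_zero,
      Additive.toMul.injective.eq_iff]
  let φ : Additive A →+ Additive A := (MulDistribMulAction.toMonoidHom A g).toAdditive
  have hφV (v : V) : φ v ∈ V :=
    hV.mpr <| (smul_pow' g _ p).symm.trans (by rw [hV.mp v.2, smul_one])
  let f : Module.End (ZMod p) V := ((φ.domRestrict V).codRestrict V hφV).toZModLinearMap p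
  have hf_pow (n : ℕ) (v : V) :
      ((f ^ n) v : Additive A) = .ofMul (g ^ n • (v : Additive A).toMul) := by
    induction n generalizing v with
    | zero => simp
    | succ n ih => rw [pow_succ, Module.End.mul_apply, ih, pow_succ, mul_smul]; rfl
  have hfq : f ^ q = 1 := LinearMap.ext fun v => Subtype.ext <| by simp [hf_pow, hg]
  obtain ⟨a₀, ha₀⟩ := exists_prime_orderOf_dvd_card' p hpA
  have : Nontrivial V := by
    refine nontrivial_of_ne ⟨.ofMul a₀, hV.mpr (ha₀ ▸ pow_orderOf_eq_one a₀)⟩ 0 fun h => ?_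
    simp [Subtype.ext_iff, ← ofMul_one, ← orderOf_eq_one_iff, ha₀, hp.out.ne_one] at h
  obtain ⟨ζ, hζ⟩ := ZMod.exists_isPrimitiveRoot_of_dvd_sub_one hq hqp
  obtain ⟨μ, hμ⟩ := Module.End.exists_hasEigenvalue_of_pow_eq_one_s1 hζ hq.ne_zero hfq
  obtain ⟨v, hv_mem, hv_ne⟩ := hμ.exists_hasEigenvector
  have hfv : f v = μ.val • v := by
    rw [Module.End.mem_eigenspace_iff.mp hv_mem, ← Nat.cast_smul_eq_nsmul (ZMod p),
      ZMod.natCast_zmod_val]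
  have hgv : g • (v : Additive A).toMul = (v : Additive A).toMul ^ μ.val :=
    (congrArg (fun w : V => (w : Additive A).toMul) hfv).trans (by simp)
  refine ⟨(v : Additive A).toMul, orderOf_eq_prime (hV.mp v.2) fun h => ?_,
    hgv ▸ Subgroup.npow_mem_zpowers _ _⟩
  exact hv_ne (Subtype.ext (congrArg Additive.ofMul h))

theorem IsPGroup.prime_dvd_card_center {p : ℕ} [Fact p.Prime] {G : Type*} [Group G] [Finite G]
    [Nontrivial G] (hG : IsPGroup p G) : p ∣ Nat.card (Subgroup.center G) :=
  have := hG.center_nontrivial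
  ((hG.to_subgroup _).card_eq_or_dvd).resolve_left Finite.one_lt_card.ne'

/-- If `q ∣ p - 1` and no subgroup of order `p` of the finite group `G` has normalizer
of order divisible by `q`, then no non-trivial `p`-subgroup of `G` has normalizer of
order divisible by `q`. -/
theorem defect_stmt_1 (p q : ℕ) (hp : p.Prime) (hq : q.Prime) (hqp : q ∣ p - 1)
    (G : Type*) [Group G] [Finite G]
    (h : ∀ U : Subgroup G, Nat.card U = p → ¬ q ∣ Nat.card (Subgroup.normalizer (U : Set G))) :
    ∀ R : Subgroup G, IsPGroup p R → R ≠ ⊥ → ¬ q ∣ Nat.card (Subgroup.normalizer (R : Set G)) := by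
  intro R hR hR_ne hqN
  have := Fact.mk hp
  have := Fact.mk hq
  have := (Subgroup.nontrivial_iff_ne_bot R).mpr hR_ne
  obtain ⟨g, hg⟩ := exists_prime_orderOf_dvd_card' q hqN
  let Z := (Subgroup.center R).map R.subtype
  have hpZ : p ∣ Nat.card Z := by
    rw [Subgroup.card_map_of_injective R.subtype_injective]
    exact hR.prime_dvd_card_center
  let g' := Subgroup.inclusion R.normalizer_le_normalizer_map_center g
  obtain ⟨a, hap, hga⟩ := exists_orderOf_eq_prime_smul_mem_zpowers hq hqp hpZ (g := g')
    (by rw [← map_pow, ← hg, pow_orderOf_eq_one, map_one])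
  have hgU : (g : G) ∈ Subgroup.normalizer (Subgroup.zpowers (a : G) : Set G) :=
    Subgroup.mem_normalizer_zpowers_of_conj_mem <| by
      have := Subgroup.mem_map_of_mem Z.subtype hga
      rwa [MonoidHom.map_zpowers] at this
  refine h (Subgroup.zpowers (a : G)) (by rw [Nat.card_zpowers, Subgroup.orderOf_coe, hap]) ?_
  rw [← hg, ← Subgroup.orderOf_coe, ← Subgroup.orderOf_mk (g : G) hgU]
  exact orderOf_dvd_natCard _
end

section
/- Let G be a finite group, p a prime, and K a normal subgroup of G such that the index |G : K| is not divisible by p. If K has an irreducible character of p-defect zero, then G has an irreducible character of p-defect zero. -/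
/-!
Let `W` be a simple `K`-representation with `v_p(dim W) = v_p |K| = v_p |G| =: a`. The
representation `X` of `G` coinduced from `W` has dimension `|G : K| · dim W`, so `p ^ (a + 1)`
does not divide `dim X`; as `X` is a sum of simple subrepresentations, one of them, `U`, has
`p ^ (a + 1) ∤ dim U`. Evaluation at `1` is a nonzero `K`-map `U → W`, so by Clifford's theorem
the restriction of `U` to `K` is a sum of `G`-conjugates of `W`, and `dim W ∣ dim U`. Hence
`v_p(dim U) = a`.
-/

open CategoryTheory Module Representation
open scoped MonoidAlgebra

universe u

section SemisimpleModule

variable (k : Type*) {R M : Type*} [Field k] [Ring R] [AddCommGroup M] [Module R M]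

theorem isSimpleModule_of_finrank_end_eq_one [IsSemisimpleModule R M]
    [Algebra k (Module.End R M)] (h : finrank k (Module.End R M) = 1) : IsSimpleModule R M := by
  have : Nontrivial (Module.End R M) := Module.nontrivial_of_finrank_eq_succ h
  have : Nontrivial M :=
    not_subsingleton_iff_nontrivial.mp fun _ => not_subsingleton (Module.End R M) inferInstance
  rw [isSimpleModule_iff]
  refine ⟨fun N => ?_⟩
  obtain ⟨N', hN⟩ := exists_isCompl N
  -- The projection onto `N` along `N'` is an idempotent scalar, hence `0` or `1`.
  obtain ⟨c, hc⟩ := (finrank_eq_one_iff_of_nonzero' (1 : Module.End R M) one_ne_zero).mp h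
    (N.projection N' hN)
  have hc_idem : IsIdempotentElem c := by
    have := Submodule.isIdempotentElem_projection hN
    rw [← hc, IsIdempotentElem, smul_mul_smul, mul_one] at this
    exact smul_left_injective k one_ne_zero this
  rcases IsIdempotentElem.iff_eq_zero_or_one.mp hc_idem with rfl | rfl
  · left
    rw [zero_smul] at hc
    exact (Submodule.eq_bot_iff N).mpr fun x hx => by
      rw [← Submodule.projection_apply_of_mem_left hN hx, ← hc, LinearMap.zero_apply]
  · right
    rw [one_smul] at hc
    exact Submodule.eq_top_iff'.mpr fun x => by
      simpa [← hc] using Submodule.projection_apply_mem hN x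

variable [Algebra k R] [Module k M] [IsScalarTower k R M] [FiniteDimensional k M]

theorem IsSemisimpleModule.exists_finrank_eq_sum [IsSemisimpleModule R M] :
    ∃ (n : ℕ) (S : Fin n → Submodule R M),
      (∀ i, IsSimpleModule R (S i)) ∧ finrank k M = ∑ i, finrank k (S i) := by
  have : Module.Finite R M := Module.Finite.of_restrictScalars_finite k R M
  obtain ⟨n, S, e, hS⟩ := IsSemisimpleModule.exists_linearEquiv_fin_dfinsupp R M
  have (i : Fin n) : Module.Finite k (S i) :=
    Module.Finite.of_injective ((S i).subtype.restrictScalars k) Subtype.val_injective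
  exact ⟨n, S, hS, (e.restrictScalars k).finrank_eq.trans (Module.finrank_directSum k _)⟩

theorem dvd_finrank_of_sSup_eq_top {s : Set (Submodule R M)}
    (hs : ∀ N ∈ s, IsSimpleModule R N) (hs_top : sSup s = ⊤) {d : ℕ}
    (hd : ∀ N ∈ s, finrank k N = d) : d ∣ finrank k M := by
  have : ∀ N : s, IsSimpleModule R N := fun N => hs N N.2
  have : IsSemisimpleModule R M := IsSemisimpleModule.of_sSup_simples_eq_top <|
    top_unique <| hs_top ▸ sSup_le_sSup hs
  obtain ⟨n, S, hS, hM⟩ := IsSemisimpleModule.exists_finrank_eq_sum k (R := R) (M := M)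
  rw [hM]
  refine Finset.dvd_sum fun i _ => ?_
  have := hS i
  obtain ⟨N, hN, ⟨e⟩⟩ := (S i).linearEquiv_of_sSup_eq_top s hs_top
  rw [(e.restrictScalars k).finrank_eq, hd N hN]

theorem exists_isSimpleModule_not_dvd_finrank [IsSemisimpleModule R M] {q : ℕ}
    (hq : ¬ q ∣ finrank k M) : ∃ N : Submodule R M, IsSimpleModule R N ∧ ¬ q ∣ finrank k N := by
  obtain ⟨n, S, hS, hM⟩ := IsSemisimpleModule.exists_finrank_eq_sum k (R := R) (M := M)
  by_contra! h
  exact hq (hM ▸ Finset.dvd_sum fun i _ => h (S i) (hS i))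

end SemisimpleModule

theorem Nat.factorization_mul_of_not_dvd {p m n : ℕ} (hm : ¬ p ∣ m) (hn : n ≠ 0) :
    (m * n).factorization p = n.factorization p := by
  have hm0 : m ≠ 0 := by rintro rfl; exact hm (dvd_zero p)
  rw [Nat.factorization_mul hm0 hn, Finsupp.add_apply, Nat.factorization_eq_zero_of_not_dvd hm,
    zero_add]

theorem Nat.factorization_eq_of_pow_dvd_of_not_pow_succ_dvd {p n a : ℕ} (hp : p.Prime)
    (h : p ^ a ∣ n) (h' : ¬ p ^ (a + 1) ∣ n) : n.factorization p = a := by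
  have hn : n ≠ 0 := by rintro rfl; exact h' (dvd_zero _)
  have := (hp.pow_dvd_iff_le_factorization hn).mp h
  have := mt (hp.pow_dvd_iff_le_factorization hn).mpr h'
  omega

theorem QuotientGroup.mul_inv_out_rightRel_mem {G : Type*} [Group G] {K : Subgroup G} (x : G) :
    x * (Quotient.out (⟦x⟧ : Quotient (QuotientGroup.rightRel K)))⁻¹ ∈ K :=
  QuotientGroup.rightRel_apply.mp (Quotient.mk_out (s := QuotientGroup.rightRel K) x)

namespace Subrepresentation

variable {k G V : Type*} [Field k] [Group G] [AddCommGroup V] [Module k V]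
  {ρ : Representation k G V}

def subtype (U : Subrepresentation ρ) : IntertwiningMap U.toRepresentation ρ :=
  ⟨U.toSubmodule.subtype, fun _ => rfl⟩

theorem isIrreducible_toRepresentation {U : Subrepresentation ρ} (hU : IsAtom U) :
    U.toRepresentation.IsIrreducible := by
  rw [irreducible_iff_isSimpleModule_asModule]
  have : IsSimpleModule k[G] (asSubmodule U) :=
    isSimpleModule_iff_isAtom.mpr ((subrepresentationSubmoduleOrderIso.isAtom_iff U).mpr hU)
  let ι := IntertwiningMap.equivLinearMapAsModule _ _ U.subtype
  have hι_range : LinearMap.range ι = asSubmodule U := by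
    ext x
    exact ⟨fun ⟨y, hy⟩ => hy ▸ y.2, fun hx => ⟨⟨x, hx⟩, rfl⟩⟩
  exact .congr ((LinearEquiv.ofInjective ι Subtype.val_injective).trans
    (LinearEquiv.ofEq _ _ hι_range))

end Subrepresentation

namespace FDRep

variable {k G : Type u} [Field k] [Group G]

noncomputable def homLinearEquivIntertwiningMap (V W : FDRep k G) :
    (V ⟶ W) ≃ₗ[k] IntertwiningMap V.ρ W.ρ :=
  (forget₂HomLinearEquiv V W).symm ≪≫ₗ Rep.homLinearEquiv _ _

theorem simple_iff_isIrreducible [Finite G] [IsAlgClosed k] [NeZero (Nat.card G : k)]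
    (V : FDRep k G) : Simple V ↔ IsIrreducible V.ρ := by
  rw [simple_iff_end_is_rank_one, (homLinearEquivIntertwiningMap V V).finrank_eq]
  refine ⟨fun h => ?_, fun _ => IsIrreducible.finrank_intertwiningMap_self _⟩
  rw [irreducible_iff_isSimpleModule_asModule]
  exact isSimpleModule_of_finrank_end_eq_one k
    ((IntertwiningMap.equivAlgEnd (ρ := V.ρ)).toLinearEquiv.finrank_eq ▸ h)

end FDRep

namespace Representation

variable {k G V W : Type*} [Field k] [Group G] [AddCommGroup V] [Module k V]
  [AddCommGroup W] [Module k W]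

theorem finrank_dvd_of_iSup_eq_top [FiniteDimensional k V] {ρ : Representation k G V}
    {ι : Type*} (U : ι → Subrepresentation ρ) (hU : ∀ i, IsAtom (U i))
    (hU_top : ⨆ i, (U i).toSubmodule = ⊤) {d : ℕ} (hd : ∀ i, finrank k (U i).toSubmodule = d) :
    d ∣ finrank k V := by
  refine dvd_finrank_of_sSup_eq_top k (R := k[G]) (M := ρ.asModule)
    (s := Set.range fun i => Subrepresentation.asSubmodule (U i)) ?_ ?_ ?_
  · rintro _ ⟨i, rfl⟩
    exact isSimpleModule_iff_isAtom.mpr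
      ((Subrepresentation.subrepresentationSubmoduleOrderIso.isAtom_iff _).mpr (hU i))
  · rw [sSup_range, eq_top_iff]
    intro x _
    have hx : ρ.asModuleEquiv x ∈ ⨆ i, (U i).toSubmodule := hU_top ▸ Submodule.mem_top
    simpa using Submodule.iSup_induction _ hx
      (motive := fun y => ρ.asModuleEquiv.symm y ∈ ⨆ i, Subrepresentation.asSubmodule (U i))
      (fun i y hy => Submodule.mem_iSup_of_mem i hy) (by simp)
      (fun y z hy hz => by simpa using add_mem hy hz)
  · rintro _ ⟨i, rfl⟩
    exact hd i

theorem exists_isAtom_finrank_eq [Finite G] [NeZero (Nat.card G : k)] {ρ : Representation k G V}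
    {σ : Representation k G W} [σ.IsIrreducible] (f : IntertwiningMap ρ σ) (hf : f ≠ 0) :
    ∃ U : Subrepresentation ρ, IsAtom U ∧ finrank k U.toSubmodule = finrank k W := by
  set f' := IntertwiningMap.equivLinearMapAsModule ρ σ f
  have hf' : Function.Surjective f' :=
    LinearMap.surjective_of_ne_zero ((LinearEquiv.map_ne_zero_iff _).mpr hf)
  obtain ⟨C, hC⟩ := exists_isCompl (LinearMap.ker f')
  let e := (Submodule.quotientEquivOfIsCompl _ _ hC).symm.trans (f'.quotKerEquivOfSurjective hf')
  have : IsSimpleModule k[G] C := .congr e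
  refine ⟨Subrepresentation.ofSubmodule' C, ?_, (e.restrictScalars k).finrank_eq⟩
  exact (Subrepresentation.subrepresentationSubmoduleOrderIso.isAtom_iff _).mp
    (isSimpleModule_iff_isAtom.mp this)

theorem exists_isAtom_not_dvd_finrank [Finite G] [NeZero (Nat.card G : k)]
    [FiniteDimensional k V] (ρ : Representation k G V) {q : ℕ} (hq : ¬ q ∣ finrank k V) :
    ∃ U : Subrepresentation ρ, IsAtom U ∧ ¬ q ∣ finrank k U.toSubmodule := by
  have hq' : ¬ q ∣ finrank k ρ.asModule := hq
  obtain ⟨N, hN, hNq⟩ := exists_isSimpleModule_not_dvd_finrank k (R := k[G]) hq'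
  exact ⟨Subrepresentation.ofSubmodule' N,
    (Subrepresentation.subrepresentationSubmoduleOrderIso.isAtom_iff _).mp
      (isSimpleModule_iff_isAtom.mp hN), hNq⟩

section Conjugation

variable (ρ : Representation k G V) {K : Subgroup G} [hK : K.Normal]

def conjSubrepresentation (g : G) (U : Subrepresentation (ρ.comp K.subtype)) :
    Subrepresentation (ρ.comp K.subtype) where
  toSubmodule := U.toSubmodule.map (ρ g)
  apply_mem_toSubmodule := by
    rintro κ _ ⟨u, hu, rfl⟩
    have hκ : g⁻¹ * κ * g ∈ K := by simpa using hK.conj_mem κ κ.2 g⁻¹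
    refine ⟨ρ (g⁻¹ * κ * g) u, U.apply_mem_toSubmodule ⟨_, hκ⟩ hu, ?_⟩
    simp [← Module.End.mul_apply, ← map_mul, mul_assoc]

theorem conjSubrepresentation_mul (g h : G) (U : Subrepresentation (ρ.comp K.subtype)) :
    conjSubrepresentation ρ (g * h) U =
      conjSubrepresentation ρ g (conjSubrepresentation ρ h U) := by
  ext1
  simp only [conjSubrepresentation, map_mul, Module.End.mul_eq_comp, Submodule.map_comp]

theorem conjSubrepresentation_one (U : Subrepresentation (ρ.comp K.subtype)) :
    conjSubrepresentation ρ 1 U = U := by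
  ext1
  simp only [conjSubrepresentation, map_one, Module.End.one_eq_id, Submodule.map_id]

def conjSubrepresentationOrderIso (g : G) :
    Subrepresentation (ρ.comp K.subtype) ≃o Subrepresentation (ρ.comp K.subtype) where
  toFun := conjSubrepresentation ρ g
  invFun := conjSubrepresentation ρ g⁻¹
  left_inv U := by rw [← conjSubrepresentation_mul, inv_mul_cancel, conjSubrepresentation_one]
  right_inv U := by rw [← conjSubrepresentation_mul, mul_inv_cancel, conjSubrepresentation_one]
  map_rel_iff' := Submodule.map_le_map_iff_of_injective (ρ.apply_bijective g).1 _ _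

theorem finrank_conjSubrepresentation (g : G) (U : Subrepresentation (ρ.comp K.subtype)) :
    finrank k (conjSubrepresentation ρ g U).toSubmodule = finrank k U.toSubmodule :=
  (U.toSubmodule.equivMapOfInjective _ (ρ.apply_bijective g).1).finrank_eq.symm

theorem iSup_conjSubrepresentation_eq_top [ρ.IsIrreducible]
    {U : Subrepresentation (ρ.comp K.subtype)} (hU : U ≠ ⊥) :
    ⨆ g, (conjSubrepresentation ρ g U).toSubmodule = ⊤ := by
  set P := ⨆ g, (conjSubrepresentation ρ g U).toSubmodule
  have hP (h : G) : P.map (ρ h) = P := by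
    calc P.map (ρ h) = ⨆ g, (conjSubrepresentation ρ (h * g) U).toSubmodule := by
          simp only [P, Submodule.map_iSup, conjSubrepresentation_mul]
          rfl
      _ = P := (Equiv.mulLeft h).iSup_comp (g := fun g => (conjSubrepresentation ρ g U).toSubmodule)
  let P' : Subrepresentation ρ := ⟨P, fun h v hv => hP h ▸ Submodule.mem_map_of_mem hv⟩
  rcases IsSimpleOrder.eq_bot_or_eq_top P' with h | h
  · refine absurd (Subrepresentation.toSubmodule_injective (eq_bot_iff.mpr ?_)) hU
    calc U.toSubmodule = (conjSubrepresentation ρ 1 U).toSubmodule := by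
          rw [conjSubrepresentation_one]
      _ ≤ P := le_iSup (fun g => (conjSubrepresentation ρ g U).toSubmodule) 1
      _ = ⊥ := congrArg Subrepresentation.toSubmodule h
  · exact congrArg Subrepresentation.toSubmodule h

/-- Clifford: the restriction of `ρ` to `K` is spanned by the `G`-conjugates of a simple
subrepresentation isomorphic to `σ`, all of dimension `dim σ`. -/
theorem finrank_dvd_of_intertwiningMap [FiniteDimensional k V] [ρ.IsIrreducible] [Finite K]
    [NeZero (Nat.card K : k)] {σ : Representation k K W} [σ.IsIrreducible]
    (f : IntertwiningMap (ρ.comp K.subtype) σ) (hf : f ≠ 0) : finrank k W ∣ finrank k V := by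
  obtain ⟨U, hU, hUW⟩ := exists_isAtom_finrank_eq f hf
  exact finrank_dvd_of_iSup_eq_top (fun g => conjSubrepresentation ρ g U)
    (fun g => ((conjSubrepresentationOrderIso ρ g).isAtom_iff U).mpr hU)
    (iSup_conjSubrepresentation_eq_top ρ hU.1)
    (fun g => (finrank_conjSubrepresentation ρ g U).trans hUW)

end Conjugation

section Coinduction

open QuotientGroup

variable {K : Subgroup G} (σ : Representation k K W)

noncomputable def coindVEquivPi : coindV K.subtype σ ≃ₗ[k] (Quotient (rightRel K) → W) where
  toFun f q := f.1 q.out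
  map_add' _ _ := rfl
  map_smul' _ _ := rfl
  invFun h := ⟨fun x => σ ⟨_, mul_inv_out_rightRel_mem x⟩ (h ⟦x⟧), fun κ x => by
    have hx : (⟦κ * x⟧ : Quotient (rightRel K)) = ⟦x⟧ :=
      Quotient.sound <| rightRel_apply.mpr <| by simp
    simp only [Subgroup.coe_subtype, hx, ← Module.End.mul_apply, ← map_mul]
    congr 2
    ext
    simp [mul_assoc]⟩
  left_inv f := by
    ext x
    have := f.2 ⟨_, mul_inv_out_rightRel_mem x⟩ (Quotient.out (⟦x⟧ : Quotient (rightRel K)))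
    simp only [Subgroup.coe_subtype, inv_mul_cancel_right] at this
    exact this.symm
  right_inv h := by
    ext q
    have h1 : (⟨_, mul_inv_out_rightRel_mem q.out⟩ : K) = 1 := by ext; simp
    change σ _ (h ⟦q.out⟧) = h q
    rw [h1, map_one, Module.End.one_apply, Quotient.out_eq]

theorem finrank_coindV [K.FiniteIndex] [FiniteDimensional k W] :
    finrank k (coindV K.subtype σ) = K.index * finrank k W := by
  have : Finite (Quotient (rightRel K)) :=
    .of_equiv _ (quotientRightRelEquivQuotientLeftRel K).symm
  have := Fintype.ofFinite (Quotient (rightRel K))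
  rw [(coindVEquivPi σ).finrank_eq, Module.finrank_pi_fintype, Finset.sum_const, smul_eq_mul,
    Finset.card_univ, ← Nat.card_eq_fintype_card,
    Nat.card_congr (quotientRightRelEquivQuotientLeftRel K), Subgroup.index]

theorem coind_apply_apply (g x : G) (f : coindV K.subtype σ) :
    (coind K.subtype σ g f).1 x = f.1 (x * g) := rfl

variable {σ} in
theorem exists_intertwiningMap_ne_zero_of_coind (U : Subrepresentation (coind K.subtype σ))
    (hU : U ≠ ⊥) : ∃ f : IntertwiningMap (U.toRepresentation.comp K.subtype) σ, f ≠ 0 := by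
  -- Frobenius reciprocity: evaluation at `1`.
  let f : IntertwiningMap (U.toRepresentation.comp K.subtype) σ :=
    { toLinearMap := LinearMap.proj 1 ∘ₗ (coindV K.subtype σ).subtype ∘ₗ U.toSubmodule.subtype
      isIntertwining' := fun κ => LinearMap.ext fun u => by
        change (coind K.subtype σ κ u.1).1 1 = σ κ (u.1.1 1)
        rw [coind_apply_apply, one_mul]
        simpa using u.1.2 κ 1 }
  obtain ⟨u, hu, hu0⟩ := Submodule.exists_mem_ne_zero_of_ne_bot fun h =>
    hU (Subrepresentation.toSubmodule_injective h)
  obtain ⟨x, hx⟩ : ∃ x, u.1 x ≠ 0 := by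
    by_contra! h
    exact hu0 (Subtype.ext (funext h))
  refine ⟨f, fun hf => hx ?_⟩
  have h := congr($hf (U.toRepresentation x ⟨u, hu⟩))
  change (coind K.subtype σ x u).1 1 = 0 at h
  rwa [coind_apply_apply, one_mul] at h

end Coinduction

end Representation

/-- If `K ⊴ G` has index prime to `p` and `K` has an irreducible character of
`p`-defect zero, then so does `G`. -/
theorem defect_stmt_3 (p : ℕ) (hp : p.Prime) (G : Type) [Group G] [Fintype G]
    (K : Subgroup G) [K.Normal] (hind : ¬ p ∣ K.index)
    (hK : ∃ W : FDRep ℂ K, CategoryTheory.Simple W ∧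
      (Module.finrank ℂ W).factorization p = (Nat.card K).factorization p) :
    ∃ V : FDRep ℂ G, CategoryTheory.Simple V ∧
      (Module.finrank ℂ V).factorization p = (Nat.card G).factorization p := by
  obtain ⟨W, hW, hWp⟩ := hK
  have : IsIrreducible W.ρ := (FDRep.simple_iff_isIrreducible W).mp hW
  have : Nontrivial W := IsSimpleModule.nontrivial ℂ[K] (Representation.asModule W.ρ)
  have hW0 : finrank ℂ W ≠ 0 := Module.finrank_pos.ne'
  rw [← Subgroup.index_mul_card K, Nat.factorization_mul_of_not_dvd hind Nat.card_pos.ne', ← hWp]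
  have hX : ¬ p ^ ((finrank ℂ W).factorization p + 1) ∣ finrank ℂ (coindV K.subtype W.ρ) := by
    rw [finrank_coindV, ← Nat.factorization_mul_of_not_dvd hind hW0]
    exact Nat.pow_succ_factorization_not_dvd (mul_ne_zero K.index_ne_zero_of_finite hW0) hp
  obtain ⟨U, hU, hUp⟩ := (coind K.subtype W.ρ).exists_isAtom_not_dvd_finrank hX
  have hU_irr := Subrepresentation.isIrreducible_toRepresentation hU
  obtain ⟨f, hf⟩ := exists_intertwiningMap_ne_zero_of_coind U hU.1
  -- `(V := _)` lets Lean pick the carrier's additive-group instance before unifying with `ρ`.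
  have hd := finrank_dvd_of_intertwiningMap (V := U.toSubmodule) U.toRepresentation f hf
  refine ⟨FDRep.of (V := U.toSubmodule) U.toRepresentation,
    (FDRep.simple_iff_isIrreducible _).mpr (by rw [FDRep.of_ρ']; exact hU_irr), ?_⟩
  exact Nat.factorization_eq_of_pow_dvd_of_not_pow_succ_dvd hp
    ((Nat.ordProj_dvd _ p).trans hd) hUp
end

section
/- Let G be a finite group, N a normal p'-subgroup of G, and R a non-trivial p-subgroup of G. Then N_{G/N}(RN/N) = N_G(R)N/N, and this quotient is isomorphic to N_G(R)/N_N(R). -/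
/-!
Since `|N|` is prime to `p`, the index of `R` in `RN` is prime to `p`, so `R` is a Sylow
`p`-subgroup of `RN`. Frattini's argument then gives `N_G(RN) ≤ N_G(R) N`, and `N_G(RN)` is the
preimage of `N_{G/N}(RN/N)`. The isomorphism is the first isomorphism theorem for the restriction
of `G → G/N` to `N_G(R)`.
-/

open Subgroup QuotientGroup Pointwise

namespace Subgroup

variable {G : Type*} [Group G]

theorem relIndex_sup_normal_eq (H N : Subgroup G) [Finite H] [N.Normal] :
    H.relIndex (H ⊔ N) = (H ⊓ N).relIndex N := by
  have h := relIndex_mul_relIndex (H ⊓ N) H (H ⊔ N) inf_le_left le_sup_left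
  rw [← relIndex_mul_relIndex (H ⊓ N) N (H ⊔ N) inf_le_right le_sup_right, inf_relIndex_left,
    relIndex_sup_right, mul_comm] at h
  exact Nat.eq_of_mul_eq_mul_right (Nat.pos_of_dvd_of_pos (relIndex_dvd_card N H) Nat.card_pos) h

theorem conj_smul_eq_self_iff_mem_normalizer {H : Subgroup G} {g : G} :
    MulAut.conj g • H = H ↔ g ∈ normalizer (H : Set G) :=
  mem_normalizer_iff_map_conj_eq.symm

theorem exists_mem_conj_smul_eq_of_not_dvd_relIndex {p : ℕ} [Fact p.Prime] {K R₁ R₂ : Subgroup G}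
    [Finite K] (h₁ : R₁ ≤ K) (h₂ : R₂ ≤ K) (hR₁ : IsPGroup p R₁) (hR₂ : IsPGroup p R₂)
    (hi₁ : ¬ p ∣ R₁.relIndex K) (hi₂ : ¬ p ∣ R₂.relIndex K) :
    ∃ k ∈ K, MulAut.conj k • R₁ = R₂ := by
  let S₁ : Sylow p K := IsPGroup.toSylow (P := R₁.subgroupOf K) hR₁.comap_subtype hi₁
  let S₂ : Sylow p K := IsPGroup.toSylow (P := R₂.subgroupOf K) hR₂.comap_subtype hi₂
  obtain ⟨k, hk⟩ := MulAction.exists_smul_eq K S₁ S₂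
  have hk' : MulAut.conj k • R₁.subgroupOf K = R₂.subgroupOf K :=
    Sylow.coe_subgroup_smul.symm.trans (congr_arg Sylow.toSubgroup hk)
  rw [conj_smul_subgroupOf h₁, subgroupOf_inj, inf_of_le_left h₂,
    inf_of_le_left (conj_smul_le_of_le h₁ k)] at hk'
  exact ⟨k, k.2, hk'⟩

/-- **Frattini's argument**: `R` is a Sylow `p`-subgroup of `K`, which need not be normal. -/
theorem normalizer_le_sup_normalizer_of_not_dvd_relIndex {p : ℕ} [Fact p.Prime]
    {K R : Subgroup G} [Finite K] (hRK : R ≤ K) (hR : IsPGroup p R) (hi : ¬ p ∣ R.relIndex K) :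
    normalizer (K : Set G) ≤ K ⊔ normalizer (R : Set G) := by
  intro g hg
  have hgK : MulAut.conj g • K = K := conj_smul_eq_self_iff_mem_normalizer.mpr hg
  obtain ⟨k, hk, hkg⟩ := exists_mem_conj_smul_eq_of_not_dvd_relIndex
    (R₁ := MulAut.conj g • R) (hgK ▸ pointwise_smul_le_pointwise_smul_iff.mpr hRK) hRK
    (hR.map _) hR (by rwa [← hgK, relIndex_pointwise_smul]) hi
  rw [← mul_smul, ← map_mul, conj_smul_eq_self_iff_mem_normalizer] at hkg
  simpa using mul_mem_sup (inv_mem hk) hkg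

theorem _root_.IsPGroup.normalizer_sup_le {p : ℕ} [Fact p.Prime] [Finite G] {R : Subgroup G}
    (hR : IsPGroup p R) {N : Subgroup G} [N.Normal] (hN : ¬ p ∣ Nat.card N) :
    normalizer ((R ⊔ N : Subgroup G) : Set G) ≤ normalizer (R : Set G) ⊔ N := by
  have hi : ¬ p ∣ R.relIndex (R ⊔ N) := by
    rw [relIndex_sup_normal_eq]
    exact fun h ↦ hN (h.trans (relIndex_dvd_card _ _))
  refine (normalizer_le_sup_normalizer_of_not_dvd_relIndex le_sup_left hR hi).trans ?_
  exact sup_le (sup_le (le_normalizer.trans le_sup_left) le_sup_right) le_sup_left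

end Subgroup

namespace QuotientGroup

variable {G : Type*} [Group G] (N : Subgroup G) [N.Normal]

theorem normalizer_map_mk' (R : Subgroup G) :
    normalizer (R.map (mk' N) : Set (G ⧸ N)) =
      (normalizer ((R ⊔ N : Subgroup G) : Set G)).map (mk' N) := by
  have hRN : R ⊔ N = (R.map (mk' N)).comap (mk' N) := by rw [comap_map_eq, ker_mk']
  rw [hRN, ← comap_normalizer_eq_of_surjective _ (mk'_surjective N),
    map_comap_eq_self_of_surjective (mk'_surjective N)]

noncomputable def mapMk'EquivQuotientSubgroupOf (H : Subgroup G) :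
    H.map (mk' N) ≃* H ⧸ N.subgroupOf H :=
  ((quotientMulEquivOfEq (by rw [Subgroup.ker_subgroupMap, ker_mk'])).trans
    (quotientKerEquivOfSurjective _ ((mk' N).subgroupMap_surjective H))).symm

end QuotientGroup

theorem defect_stmt_14_general (p : ℕ) (hp : p.Prime) (G : Type*) [Group G] [Finite G]
    (N : Subgroup G) [N.Normal] (hN : (Nat.card N).Coprime p)
    (R : Subgroup G) (hR : IsPGroup p R) :
    Subgroup.normalizer (Subgroup.map (QuotientGroup.mk' N) R : Set (G ⧸ N))
        = Subgroup.map (QuotientGroup.mk' N) (Subgroup.normalizer (R : Set G)) ∧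
      Nonempty ((Subgroup.map (QuotientGroup.mk' N) (Subgroup.normalizer (R : Set G))) ≃*
        ((Subgroup.normalizer (R : Set G)) ⧸ (N.subgroupOf (Subgroup.normalizer (R : Set G))))) := by
  have : Fact p.Prime := ⟨hp⟩
  have hfrattini := hR.normalizer_sup_le (N := N) (hp.coprime_iff_not_dvd.mp hN.symm)
  refine ⟨le_antisymm ?_ (le_normalizer_map _), ⟨QuotientGroup.mapMk'EquivQuotientSubgroupOf N _⟩⟩
  calc normalizer (R.map (mk' N) : Set (G ⧸ N))
      = (normalizer ((R ⊔ N : Subgroup G) : Set G)).map (mk' N) := normalizer_map_mk' N R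
    _ ≤ (normalizer (R : Set G) ⊔ N).map (mk' N) := map_mono hfrattini
    _ = (normalizer (R : Set G)).map (mk' N) := by rw [Subgroup.map_sup, map_mk'_self, sup_bot_eq]

/-- For a normal `p'`-subgroup `N` of the finite group `G` and a non-trivial
`p`-subgroup `R`, one has `N_{G/N}(RN/N) = N_G(R)N/N ≅ N_G(R)/N_N(R)`. -/
theorem defect_stmt_14 (p : ℕ) (hp : p.Prime) (G : Type*) [Group G] [Finite G]
    (N : Subgroup G) [N.Normal] (hN : (Nat.card N).Coprime p)
    (R : Subgroup G) (hR : IsPGroup p R) (hRbot : R ≠ ⊥) :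
    Subgroup.normalizer (Subgroup.map (QuotientGroup.mk' N) R : Set (G ⧸ N))
        = Subgroup.map (QuotientGroup.mk' N) (Subgroup.normalizer (R : Set G)) ∧
      Nonempty ((Subgroup.map (QuotientGroup.mk' N) (Subgroup.normalizer (R : Set G))) ≃*
        ((Subgroup.normalizer (R : Set G)) ⧸ (N.subgroupOf (Subgroup.normalizer (R : Set G))))) :=
  defect_stmt_14_general p hp G N hN R hR
end
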